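/- arXiv:1808.05667 — 2 statements merged into one kernel-verified Lean document; each statement's English description precedes it below -/
import Mathlib

section
/- Let X and Z be real Banach spaces, A : X → Z a continuous linear operator, and F : X → Z a continuously Fréchet differentiable (C¹) map. Let S = {u ∈ X : A u = F(u)}. If S is compact and for every u ∈ S the operator A − DF(u) : X → Z is bijective with continuous inverse, then S is a finite set. -/
/-!
At a solution `u`, the map `v ↦ A v - F v` vanishes and has derivative `A - DF(u)`, which is
bounded below because it has a bounded left inverse. A map that is differentiable at a point
with a bounded-below derivative takes the value at that point nowhere else nearby, so every
solution is isolated; a compact set of isolated points is finite.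
-/

open Filter Topology

theorem IsCompact.finite_of_forall_eventually_notMem {X : Type*} [TopologicalSpace X] {s : Set X}
    (hs : IsCompact s) (hiso : ∀ x ∈ s, ∀ᶠ y in 𝓝[≠] x, y ∉ s) : s.Finite :=
  hs.finite <| isDiscrete_iff_nhdsNE.2 fun x hx => inf_principal_eq_bot.2 (hiso x hx)

theorem IsCompact.finite_preimage_singleton_of_hasFDerivAt {𝕜 : Type*} [NontriviallyNormedField 𝕜]
    {E F : Type*} [NormedAddCommGroup E] [NormedSpace 𝕜 E] [NormedAddCommGroup F]
    [NormedSpace 𝕜 F] {f : E → F} {c : F} (hs : IsCompact (f ⁻¹' {c}))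
    (hf : ∀ x ∈ f ⁻¹' {c}, ∃ f' : E →L[𝕜] F, HasFDerivAt f f' x ∧ ∃ K, AntilipschitzWith K f') :
    (f ⁻¹' {c}).Finite :=
  hs.finite_of_forall_eventually_notMem fun x hx => by
    obtain ⟨f', hf', hanti⟩ := hf x hx
    exact hf'.eventually_ne hanti

theorem solution_set_finite_of_invertible_linearizations_general
    {X Z : Type*} [NormedAddCommGroup X] [NormedSpace ℝ X]
    [NormedAddCommGroup Z] [NormedSpace ℝ Z]
    (A : X →L[ℝ] Z) (F : X → Z) (hF : ContDiff ℝ 1 F)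
    (hcpt : IsCompact {u : X | A u = F u})
    (hinv : ∀ u ∈ {u : X | A u = F u}, ∃ G : Z →L[ℝ] X,
      (∀ x : X, G ((A - fderiv ℝ F u) x) = x) ∧
      (∀ z : Z, (A - fderiv ℝ F u) (G z) = z)) :
    {u : X | A u = F u}.Finite := by
  have hS : {u : X | A u = F u} = (fun u => A u - F u) ⁻¹' {0} :=
    Set.ext fun _ => sub_eq_zero.symm
  rw [hS] at hcpt hinv ⊢
  refine hcpt.finite_preimage_singleton_of_hasFDerivAt (𝕜 := ℝ) fun u hu => ?_
  obtain ⟨G, hG, -⟩ := hinv u hu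
  have hFu : HasFDerivAt F (fderiv ℝ F u) u :=
    ((hF.differentiable one_ne_zero) u).hasFDerivAt
  exact ⟨A - fderiv ℝ F u, A.hasFDerivAt.sub hFu, _, G.lipschitz.to_rightInverse hG⟩

/-- If the solution set `S = {u : A u = F u}` is compact and at every `u ∈ S` the
linearization `A − DF(u)` is bijective with continuous inverse, then `S` is finite. -/
theorem solution_set_finite_of_invertible_linearizations
    {X Z : Type*} [NormedAddCommGroup X] [NormedSpace ℝ X] [CompleteSpace X]
    [NormedAddCommGroup Z] [NormedSpace ℝ Z] [CompleteSpace Z]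
    (A : X →L[ℝ] Z) (F : X → Z) (hF : ContDiff ℝ 1 F)
    (hcpt : IsCompact {u : X | A u = F u})
    (hinv : ∀ u ∈ {u : X | A u = F u}, ∃ G : Z →L[ℝ] X,
      (∀ x : X, G ((A - fderiv ℝ F u) x) = x) ∧
      (∀ z : Z, (A - fderiv ℝ F u) (G z) = z)) :
    {u : X | A u = F u}.Finite :=
  solution_set_finite_of_invertible_linearizations_general A F hF hcpt hinv
end

section
/- Let X and Z be real Banach spaces, A : X → Z a continuous linear operator, u₀ ∈ X, and let F₀ and Fₙ (n ∈ ℕ) be continuously Fréchet differentiable (C¹) maps X → Z with A u₀ = F₀(u₀). Assume: (i) there exists C > 0 such that for every n the operator Lₙ := A − DFₙ(u₀) : X → Z is bijective with ‖Lₙ⁻¹ z‖ ≤ C‖z‖ for all z ∈ Z; (ii) there exists δ̃ > 0 such that for every n and all u, v with ‖u − u₀‖ ≤ δ̃ and ‖v − u₀‖ ≤ δ̃ one has ‖Fₙ(u) − Fₙ(v) − DFₙ(u₀)(u − v)‖ ≤ (1/(2C))‖u − v‖; (iii) Lₙ⁻¹(Fₙ(u₀) − DFₙ(u₀)u₀)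 → u₀ in X as n → ∞. Then there exist δ > 0 and N ∈ ℕ such that for every n ≥ N the equation A u = Fₙ(u) has exactly one solution uₙ* in the closed ball {u ∈ X : ‖u − u₀‖ ≤ δ}, and moreover uₙ* → u₀ in X as n → ∞. -/
/-!
Write `D = DFₙ(u₀)` and `L = A − D`. Then `A u = Fₙ u` iff `u` is a fixed point of the
chord map `Φₙ u = L⁻¹ (Fₙ u − D u)`. By (i) and (ii), every `Φₙ` is `1/2`-Lipschitz on the
closed ball of radius `δ̃` about `u₀`, and by (iii) the defect `‖Φₙ u₀ − u₀‖` tends to zero.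
Once it is at most `δ̃/2`, `Φₙ` maps the ball into itself, so the contraction mapping theorem
yields a unique fixed point `uₙ*` in the ball, with `‖uₙ* − u₀‖ ≤ 2 ‖Φₙ u₀ − u₀‖ → 0`.
-/

open Filter Function Metric Set Topology

section ContractionOnClosedBall

variable {α : Type*} {f : α → α} {K : NNReal} {x : α} {r : ℝ}

theorem LipschitzOnWith.mapsTo_closedBall [PseudoMetricSpace α]
    (hf : LipschitzOnWith K f (closedBall x r)) (hx : dist (f x) x ≤ (1 - K) * r) :
    MapsTo f (closedBall x r) (closedBall x r) := by
  intro y hy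
  have hr : 0 ≤ r := dist_nonneg.trans hy
  have hxx : x ∈ closedBall x r := mem_closedBall_self hr
  rw [mem_closedBall] at hy ⊢
  calc dist (f y) x ≤ dist (f y) (f x) + dist (f x) x := dist_triangle _ _ _
    _ ≤ K * dist y x + (1 - K) * r :=
      add_le_add (hf.dist_le_mul y (mem_closedBall.2 hy) x hxx) hx
    _ ≤ K * r + (1 - K) * r := by gcongr
    _ = r := by ring

theorem exists_isFixedPt_mem_closedBall_of_lipschitzOnWith [MetricSpace α] [CompleteSpace α]
    (hK : K < 1) (hf : LipschitzOnWith K f (closedBall x r))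
    (hx : dist (f x) x ≤ (1 - K) * r) :
    ∃ y ∈ closedBall x r, IsFixedPt f y ∧ (∀ z ∈ closedBall x r, IsFixedPt f z → z = y) ∧
      dist y x ≤ dist (f x) x / (1 - K) := by
  have hr : 0 ≤ r :=
    nonneg_of_mul_nonneg_right (dist_nonneg.trans hx) (sub_pos.2 (NNReal.coe_lt_one.2 hK))
  have hmaps := hf.mapsTo_closedBall hx
  have : CompleteSpace (closedBall x r) := isClosed_closedBall.completeSpace_coe
  have hcontr : ContractingWith K (hmaps.restrict f _ _) :=
    ⟨hK, LipschitzWith.of_dist_le_mul fun y z => hf.dist_le_mul y y.2 z z.2⟩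
  let x' : closedBall x r := ⟨x, mem_closedBall_self hr⟩
  have : Nonempty (closedBall x r) := ⟨x'⟩
  let y := ContractingWith.fixedPoint _ hcontr
  have hy : IsFixedPt f y := Subtype.ext_iff.1 (ContractingWith.fixedPoint_isFixedPt hcontr)
  refine ⟨y, y.2, hy, fun z hz hfz => ?_, ?_⟩
  · exact Subtype.ext_iff.1 (hcontr.fixedPoint_unique (x := ⟨z, hz⟩) (Subtype.ext hfz))
  · rw [dist_comm, dist_comm (f x)]
    exact hcontr.dist_fixedPoint_le x'

end ContractionOnClosedBall

section ChordMap

variable {𝕜 X Z : Type*} [NormedField 𝕜] [NormedAddCommGroup X] [NormedSpace 𝕜 X]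
  [NormedAddCommGroup Z] [NormedSpace 𝕜 Z]
  {A D : X →L[𝕜] Z} {Linv : Z →L[𝕜] X} {F : X → Z} {K : NNReal}

def chordMap (Linv : Z →L[𝕜] X) (D : X →L[𝕜] Z) (F : X → Z) (u : X) : X :=
  Linv (F u - D u)

theorem isFixedPt_chordMap_iff (hl : ∀ x, Linv ((A - D) x) = x)
    (hr : ∀ z, (A - D) (Linv z) = z) {u : X} : IsFixedPt (chordMap Linv D F) u ↔ A u = F u := by
  constructor
  · intro h
    have := hr (F u - D u)
    rw [← chordMap, h.eq, sub_apply] at this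
    exact sub_left_inj.1 this
  · intro h
    rw [IsFixedPt, chordMap, ← h, ← sub_apply, hl]

theorem chordMap_sub_chordMap (u v : X) :
    chordMap Linv D F u - chordMap Linv D F v = Linv (F u - F v - D (u - v)) := by
  rw [chordMap, chordMap, ← map_sub, map_sub D]
  congr 1
  abel

theorem lipschitzOnWith_chordMap {C : ℝ} (hC : 0 < C) (hLinv : ∀ z, ‖Linv z‖ ≤ C * ‖z‖)
    {s : Set X} (hF : ∀ u ∈ s, ∀ v ∈ s, ‖F u - F v - D (u - v)‖ ≤ K / C * ‖u - v‖) :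
    LipschitzOnWith K (chordMap Linv D F) s := by
  refine LipschitzOnWith.of_dist_le_mul fun u hu v hv => ?_
  rw [dist_eq_norm, dist_eq_norm, chordMap_sub_chordMap]
  calc ‖Linv (F u - F v - D (u - v))‖ ≤ C * ‖F u - F v - D (u - v)‖ := hLinv _
    _ ≤ C * (K / C * ‖u - v‖) := by gcongr; exact hF u hu v hv
    _ = K * ‖u - v‖ := by field_simp

end ChordMap

theorem perturbed_solutions_near_nondegenerate_general
    {X Z : Type*} [NormedAddCommGroup X] [NormedSpace ℝ X] [CompleteSpace X]
    [NormedAddCommGroup Z] [NormedSpace ℝ Z]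
    (A : X →L[ℝ] Z) (u₀ : X) (F : ℕ → X → Z)
    (C : ℝ) (hC : 0 < C) (Linv : ℕ → Z →L[ℝ] X)
    (hLl : ∀ n, ∀ x : X, Linv n ((A - fderiv ℝ (F n) u₀) x) = x)
    (hLr : ∀ n, ∀ z : Z, (A - fderiv ℝ (F n) u₀) (Linv n z) = z)
    (hLnorm : ∀ n, ∀ z : Z, ‖Linv n z‖ ≤ C * ‖z‖)
    (δt : ℝ) (hδt : 0 < δt)
    (hii : ∀ n, ∀ u v : X, ‖u - u₀‖ ≤ δt → ‖v - u₀‖ ≤ δt →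
      ‖F n u - F n v - (fderiv ℝ (F n) u₀) (u - v)‖ ≤ (1 / (2 * C)) * ‖u - v‖)
    (hiii : Tendsto (fun n => Linv n (F n u₀ - (fderiv ℝ (F n) u₀) u₀))
      atTop (nhds u₀)) :
    ∃ δ : ℝ, 0 < δ ∧ ∃ N : ℕ, ∃ usol : ℕ → X,
      (∀ n ≥ N, ‖usol n - u₀‖ ≤ δ ∧ A (usol n) = F n (usol n) ∧
        ∀ v : X, ‖v - u₀‖ ≤ δ → A v = F n v → v = usol n) ∧
      Tendsto usol atTop (nhds u₀) := by
  let K : NNReal := 1 / 2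
  have hK : K < 1 := by norm_num [K]
  set Φ := fun n => chordMap (Linv n) (fderiv ℝ (F n) u₀) (F n)
  have hΦ n : LipschitzOnWith K (Φ n) (closedBall u₀ δt) :=
    lipschitzOnWith_chordMap hC (hLnorm n) fun u hu v hv => by
      convert hii n u v (mem_closedBall_iff_norm.1 hu) (mem_closedBall_iff_norm.1 hv) using 2
      simp only [K]; push_cast; ring
  have hdefect : Tendsto (fun n => dist (Φ n u₀) u₀) atTop (𝓝 0) :=
    tendsto_iff_dist_tendsto_zero.1 hiii
  obtain ⟨N, hN⟩ := eventually_atTop.1 (hdefect.eventually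
    (eventually_le_nhds (mul_pos (sub_pos.2 (NNReal.coe_lt_one.2 hK)) hδt)))
  have hsol n : ∃ u, N ≤ n → u ∈ closedBall u₀ δt ∧ IsFixedPt (Φ n) u ∧
      (∀ v ∈ closedBall u₀ δt, IsFixedPt (Φ n) v → v = u) ∧
      dist u u₀ ≤ dist (Φ n u₀) u₀ / (1 - K) := by
    by_cases hn : N ≤ n
    · obtain ⟨u, hu⟩ := exists_isFixedPt_mem_closedBall_of_lipschitzOnWith hK (hΦ n) (hN n hn)
      exact ⟨u, fun _ => hu⟩
    · exact ⟨u₀, fun h => absurd h hn⟩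
  choose usol husol using hsol
  have hsolves n u : IsFixedPt (Φ n) u ↔ A u = F n u := isFixedPt_chordMap_iff (hLl n) (hLr n)
  refine ⟨δt, hδt, N, usol, fun n hn => ?_, ?_⟩
  · obtain ⟨hmem, hfix, huniq, -⟩ := husol n hn
    exact ⟨mem_closedBall_iff_norm.1 hmem, (hsolves n _).1 hfix, fun v hv hAv =>
      huniq v (mem_closedBall_iff_norm.2 hv) ((hsolves n v).2 hAv)⟩
  · refine tendsto_iff_dist_tendsto_zero.2 (squeeze_zero' (.of_forall fun _ => dist_nonneg) ?_
      (by simpa only [zero_div] using hdefect.div_const (1 - (K : ℝ))))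
    filter_upwards [eventually_ge_atTop N] with n hn using (husol n hn).2.2.2

/-- Lower semicontinuity at a nondegenerate solution: if `A u₀ = F₀ u₀`, the linearized
operators `Lₙ = A − DFₙ(u₀)` are uniformly invertible (i), the nonlinearities satisfy a
uniform tangency estimate near `u₀` (ii), and `Lₙ⁻¹(Fₙ(u₀) − DFₙ(u₀)u₀) → u₀` (iii), then
for some `δ > 0` and all large `n` the equation `A u = Fₙ(u)` has exactly one solution
`uₙ*` with `‖uₙ* − u₀‖ ≤ δ`, and `uₙ* → u₀`. -/
theorem perturbed_solutions_near_nondegenerate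
    {X Z : Type*} [NormedAddCommGroup X] [NormedSpace ℝ X] [CompleteSpace X]
    [NormedAddCommGroup Z] [NormedSpace ℝ Z] [CompleteSpace Z]
    (A : X →L[ℝ] Z) (u₀ : X) (F₀ : X → Z) (F : ℕ → X → Z)
    (hF₀ : ContDiff ℝ 1 F₀) (hF : ∀ n, ContDiff ℝ 1 (F n))
    (h₀ : A u₀ = F₀ u₀)
    (C : ℝ) (hC : 0 < C) (Linv : ℕ → Z →L[ℝ] X)
    (hLl : ∀ n, ∀ x : X, Linv n ((A - fderiv ℝ (F n) u₀) x) = x)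
    (hLr : ∀ n, ∀ z : Z, (A - fderiv ℝ (F n) u₀) (Linv n z) = z)
    (hLnorm : ∀ n, ∀ z : Z, ‖Linv n z‖ ≤ C * ‖z‖)
    (δt : ℝ) (hδt : 0 < δt)
    (hii : ∀ n, ∀ u v : X, ‖u - u₀‖ ≤ δt → ‖v - u₀‖ ≤ δt →
      ‖F n u - F n v - (fderiv ℝ (F n) u₀) (u - v)‖ ≤ (1 / (2 * C)) * ‖u - v‖)
    (hiii : Tendsto (fun n => Linv n (F n u₀ - (fderiv ℝ (F n) u₀) u₀))
      atTop (nhds u₀)) :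
    ∃ δ : ℝ, 0 < δ ∧ ∃ N : ℕ, ∃ usol : ℕ → X,
      (∀ n ≥ N, ‖usol n - u₀‖ ≤ δ ∧ A (usol n) = F n (usol n) ∧
        ∀ v : X, ‖v - u₀‖ ≤ δ → A v = F n v → v = usol n) ∧
      Tendsto usol atTop (nhds u₀) :=
  perturbed_solutions_near_nondegenerate_general A u₀ F C hC Linv hLl hLr hLnorm δt hδt hii hiii
end
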